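/- arXiv:1410.7595 — 2 statements merged into one kernel-verified Lean document; each statement's English description precedes it below -/
import Mathlib

section
/- For every timelike vector v ∈ A at which the fundamental tensor g_v is nondegenerate and every causal vector w ∈ Â, one has g_v(v,w) > 0; equivalently, every causal vector w decomposes as w = λ·v + u with λ > 0 and g_v(v,u) = 0 (this strict positivity is established in the proof of Proposition 2.3(ii) and used in Proposition 7.5). -/
open Set Filter Topology

/-- One-sided first derivative test. -/
lemma aux_deriv_nonneg_right {f : ℝ → ℝ} {d δ : ℝ} (hδ : 0 < δ)
    (hd : HasDerivAt f d 0) (hmin : ∀ t, 0 ≤ t → t < δ → f 0 ≤ f t) : 0 ≤ d := by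
  have h2 : Tendsto (slope f 0) (𝓝[>] 0) (𝓝 d) :=
    (hasDerivAt_iff_tendsto_slope.1 hd).mono_left
      (nhdsWithin_mono 0 (fun t ht => ne_of_gt ht))
  refine ge_of_tendsto h2 ?_
  filter_upwards [Ioo_mem_nhdsGT_of_mem (Set.left_mem_Ico.2 hδ)] with t ht
  have h3 : 0 ≤ (f t - f 0) / (t - 0) :=
    div_nonneg (by linarith [hmin t ht.1.le ht.2]) (by linarith [ht.1])
  simpa [slope_def_field] using h3

/-- One-sided second derivative test. -/
lemma aux_snd_deriv_nonneg_right {f f' : ℝ → ℝ} {d δ : ℝ} (hδ : 0 < δ)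
    (hf : ∀ t ∈ Set.Ioo (-δ) δ, HasDerivAt f (f' t) t)
    (hd : HasDerivAt f' d 0) (h0 : f' 0 = 0)
    (hmin : ∀ t, 0 ≤ t → t < δ → f 0 ≤ f t) : 0 ≤ d := by
  have h1 : Tendsto (slope f' 0) (𝓝[>] 0) (𝓝 d) :=
    (hasDerivAt_iff_tendsto_slope.1 hd).mono_left
      (nhdsWithin_mono 0 (fun t ht => ne_of_gt ht))
  have hfreq : ∃ᶠ t in 𝓝[>] (0:ℝ), slope f' 0 t ∈ Ici (0:ℝ) := by
    rw [Filter.frequently_iff]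
    intro U hU
    obtain ⟨b, hb0, hb⟩ := mem_nhdsGT_iff_exists_Ioo_subset.1 hU
    set b' := min b (δ/2) with hb'def
    have hb'0 : (0:ℝ) < b' := lt_min (mem_Ioi.1 hb0) (by linarith)
    have hb'δ : b' < δ := lt_of_le_of_lt (min_le_right b (δ/2)) (by linarith)
    have hb'b : b' ≤ b := min_le_left b (δ/2)
    have hsub : Icc (0:ℝ) b' ⊆ Ioo (-δ) δ := fun x hx =>
      ⟨by linarith [hx.1], lt_of_le_of_lt hx.2 hb'δ⟩
    have hcont : ContinuousOn f (Icc 0 b') := fun x hx =>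
      (hf x (hsub hx)).continuousAt.continuousWithinAt
    obtain ⟨c, hc, hceq⟩ := exists_hasDerivAt_eq_slope f f' hb'0 hcont
      (fun x hx => hf x (hsub ⟨hx.1.le, hx.2.le⟩))
    refine ⟨c, hb ⟨hc.1, lt_of_lt_of_le hc.2 hb'b⟩, ?_⟩
    have hfb : 0 ≤ f b' - f 0 := by linarith [hmin b' hb'0.le hb'δ]
    have hfc : 0 ≤ f' c := by
      rw [hceq]; exact div_nonneg hfb (by linarith [hb'0])
    have heq : slope f' 0 c = f' c / c := by simp [slope_def_field, h0]
    rw [mem_Ici, heq]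
    exact div_nonneg hfc hc.1.le
  have hd2 : d ∈ closure (Ici (0:ℝ)) := mem_closure_of_frequently_of_tendsto hfreq h1
  simpa using hd2

/-- Superadditivity of `√L` on the cone, from convexity of `{L ≥ 1}`. -/
lemma aux_superadd {V : Type} [NormedAddCommGroup V] [NormedSpace ℝ V] (A : Set V)
    (hA_cone : ∀ v ∈ A, ∀ t : ℝ, 0 < t → t • v ∈ A)
    (Astar : Set V) (hA_sub : A ⊆ Astar)
    (L : V → ℝ)
    (hL_homog : ∀ v ∈ Astar, ∀ t : ℝ, 0 < t → L (t • v) = t ^ 2 * L v)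
    (hL_pos : ∀ v ∈ A, 0 < L v)
    (hL_conv : Convex ℝ {v ∈ A | 1 ≤ L v})
    (x : V) (hx : x ∈ A) (y : V) (hy : y ∈ A) :
    x + y ∈ A ∧ Real.sqrt (L x) + Real.sqrt (L y) ≤ Real.sqrt (L (x + y)) := by
  have hLx := hL_pos x hx
  have hLy := hL_pos y hy
  set a := Real.sqrt (L x) with ha_def
  set b := Real.sqrt (L y) with hb_def
  have ha : 0 < a := Real.sqrt_pos.2 hLx
  have hb : 0 < b := Real.sqrt_pos.2 hLy
  have ha2 : a ^ 2 = L x := Real.sq_sqrt hLx.le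
  have hb2 : b ^ 2 = L y := Real.sq_sqrt hLy.le
  have hx' : (1/a) • x ∈ {v ∈ A | 1 ≤ L v} := by
    refine ⟨hA_cone x hx _ (by positivity), ?_⟩
    rw [hL_homog x (hA_sub hx) _ (by positivity), ← ha2]
    rw [div_pow, one_pow, div_mul_cancel₀]
    positivity
  have hy' : (1/b) • y ∈ {v ∈ A | 1 ≤ L v} := by
    refine ⟨hA_cone y hy _ (by positivity), ?_⟩
    rw [hL_homog y (hA_sub hy) _ (by positivity), ← hb2]
    rw [div_pow, one_pow, div_mul_cancel₀]
    positivity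
  have hab : (0:ℝ) < a + b := by linarith
  have hcomb := hL_conv hx' hy' (a := a/(a+b)) (b := b/(a+b))
    (by positivity) (by positivity) (by field_simp)
  set z := (a/(a+b)) • ((1/a) • x) + (b/(a+b)) • ((1/b) • y) with hz_def
  have hz : z = (1/(a+b)) • (x + y) := by
    have e1 : (a/(a+b)) * (1/a) = 1/(a+b) := by field_simp
    have e2 : (b/(a+b)) * (1/b) = 1/(a+b) := by field_simp
    rw [hz_def, smul_smul, smul_smul, e1, e2, smul_add]
  have hzA : z ∈ A := hcomb.1
  have hzL : 1 ≤ L z := hcomb.2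
  have hxy : x + y = (a+b) • z := by
    rw [hz, smul_smul, mul_one_div, div_self hab.ne', one_smul]
  have hmem : x + y ∈ A := by rw [hxy]; exact hA_cone z hzA _ hab
  refine ⟨hmem, ?_⟩
  have hLxy : (a+b)^2 ≤ L (x + y) := by
    rw [hxy, hL_homog z (hA_sub hzA) _ hab]
    nlinarith
  calc a + b ≤ Real.sqrt ((a+b)^2) := by rw [Real.sqrt_sq hab.le]
    _ ≤ Real.sqrt (L (x+y)) := Real.sqrt_le_sqrt hLxy

/-- An open convex cone absorbs its closure under translation. -/
lemma aux_mem {V : Type} [NormedAddCommGroup V] [NormedSpace ℝ V]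
    (A : Set V) (hA_open : IsOpen A) (hA_conv : Convex ℝ A)
    (hA_cone : ∀ v ∈ A, ∀ t : ℝ, 0 < t → t • v ∈ A)
    (v : V) (hv : v ∈ A) (w : V) (hw : w ∈ closure A) (t : ℝ) (ht : 0 ≤ t) :
    v + t • w ∈ A := by
  rcases eq_or_lt_of_le ht with rfl | ht
  · simpa using hv
  · have h1t : (0:ℝ) < 1 + t := by linarith
    have hcomb := hA_conv.combo_interior_closure_mem_interior
      (x := v) (y := w) (a := 1/(1+t)) (b := t/(1+t))
      (by rwa [hA_open.interior_eq]) hw (by positivity) (by positivity) (by field_simp)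
    rw [hA_open.interior_eq] at hcomb
    have hmem := hA_cone _ hcomb (1+t) h1t
    have e1 : (1+t) * (1/(1+t)) = 1 := by field_simp
    have e2 : (1+t) * (t/(1+t)) = t := by field_simp
    rwa [smul_add, smul_smul, smul_smul, e1, e2, one_smul] at hmem

/-- The fundamental tensor of `L` at `v`: `g_v(u,w) = (1/2)·D²L(v)(u,w)`. -/
noncomputable def fundamentalTensor {V : Type} [NormedAddCommGroup V] [NormedSpace ℝ V]
    (L : V → ℝ) (v u w : V) : ℝ :=
  (1 / 2) * iteratedFDeriv ℝ 2 L v ![u, w]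

set_option maxHeartbeats 1000000 in
/-- For a timelike vector `v` with nondegenerate fundamental tensor and any causal
vector `w`, one has `g_v(v,w) > 0`; equivalently, `w = λ·v + u` with `λ > 0` and
`g_v(v,u) = 0` (from the proof of Proposition 2.3(ii)). -/
theorem finsler_timelike_causal_positive_product
    {V : Type} [NormedAddCommGroup V] [NormedSpace ℝ V] [FiniteDimensional ℝ V]
    {n : ℕ} (hn : 2 ≤ n) (hdim : Module.finrank ℝ V = n)
    (A : Set V) (hA_open : IsOpen A) (hA_ne : A.Nonempty)
    (hA0 : (0 : V) ∉ A) (hA_conv : Convex ℝ A)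
    (hA_cone : ∀ v ∈ A, ∀ t : ℝ, 0 < t → t • v ∈ A)
    (hA_salient : ∀ v : V, v ∈ closure A → -v ∈ closure A → v = 0)
    (Astar : Set V) (hAstar_open : IsOpen Astar) (hAstar0 : (0 : V) ∉ Astar)
    (hAstar_cone : ∀ v ∈ Astar, ∀ t : ℝ, 0 < t → t • v ∈ Astar)
    (hAhat_sub : closure A \ {0} ⊆ Astar)
    (L : V → ℝ)
    (hL_smooth : ∀ v ∈ Astar, ContDiffAt ℝ (⊤ : ℕ∞) L v)
    (hL_homog : ∀ v ∈ Astar, ∀ t : ℝ, 0 < t → L (t • v) = t ^ 2 * L v)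
    (hL_pos : ∀ v ∈ A, 0 < L v)
    (hL_null : ∀ v ∈ closure A \ A, v ≠ 0 → L v = 0)
    (hL_conv : Convex ℝ {v ∈ A | 1 ≤ L v})
    (hg_nondeg : ∀ v ∈ closure A \ A, v ≠ 0 →
      ∀ u : V, (∀ w : V, fundamentalTensor L v u w = 0) → u = 0)
    (v : V) (hv : v ∈ A)
    (hv_nondeg : ∀ u : V, (∀ w : V, fundamentalTensor L v u w = 0) → u = 0)
    (w : V) (hw : w ∈ closure A \ {0}) :
    0 < fundamentalTensor L v v w ∧
    ∃ l : ℝ, 0 < l ∧ ∃ u : V, w = l • v + u ∧ fundamentalTensor L v v u = 0 := by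
  classical
  have hw0 : w ≠ 0 := fun h => hw.2 (by simp [h])
  have hA_sub : A ⊆ Astar := fun x hx =>
    hAhat_sub ⟨subset_closure hx, fun h => hA0 (by rwa [Set.mem_singleton_iff.1 h] at hx)⟩
  have hvstar : v ∈ Astar := hA_sub hv
  have hwstar : w ∈ Astar := hAhat_sub hw
  have hLv : 0 < L v := hL_pos v hv
  -- fundamental tensor in terms of iterated fderiv
  have hft : ∀ x a b : V, fundamentalTensor L x a b
      = (1/2) * (fderiv ℝ (fderiv ℝ L) x a b) := by
    intro x a b
    rw [fundamentalTensor, iteratedFDeriv_two_apply]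
    simp
  -- line derivatives
  have hline : ∀ (cc uu : V) (t : ℝ), cc + t • uu ∈ Astar →
      HasDerivAt (fun s : ℝ => L (cc + s • uu)) (fderiv ℝ L (cc + t • uu) uu) t := by
    intro cc uu t hx
    have h1 : HasDerivAt (fun s : ℝ => cc + s • uu) uu t := by
      simpa using ((hasDerivAt_id t).smul_const uu).const_add cc
    simpa [Function.comp_def] using ((hL_smooth _ hx).differentiableAt (by simp)).hasFDerivAt.comp_hasDerivAt t h1
  have hline2 : ∀ (cc uu bb : V) (t : ℝ), cc + t • uu ∈ Astar →
      HasDerivAt (fun s : ℝ => fderiv ℝ L (cc + s • uu) bb)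
        (fderiv ℝ (fderiv ℝ L) (cc + t • uu) uu bb) t := by
    intro cc uu bb t hx
    have h1 : HasDerivAt (fun s : ℝ => cc + s • uu) uu t := by
      simpa using ((hasDerivAt_id t).smul_const uu).const_add cc
    have h2 : HasFDerivAt (fderiv ℝ L) (fderiv ℝ (fderiv ℝ L) (cc + t • uu)) (cc + t • uu) :=
      (((hL_smooth _ hx).fderiv_right (m := 1) (WithTop.coe_le_coe.2 le_top)).differentiableAt one_ne_zero).hasFDerivAt
    simpa [Function.comp_def] using
      ((ContinuousLinearMap.apply ℝ ℝ bb).hasFDerivAt.comp (cc + t • uu) h2).comp_hasDerivAt t h1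
  -- eventual membership along lines
  have hball : ∀ (u : V) (S : Set V), IsOpen S → v ∈ S →
      ∃ δ : ℝ, 0 < δ ∧ ∀ s : ℝ, |s| < δ → v + s • u ∈ S := by
    intro u S hSo hvS
    have hc : Continuous (fun s : ℝ => v + s • u) :=
      continuous_const.add (continuous_id.smul continuous_const)
    have hpre : IsOpen ((fun s : ℝ => v + s • u) ⁻¹' S) := hSo.preimage hc
    have h0 : (0:ℝ) ∈ (fun s : ℝ => v + s • u) ⁻¹' S := by simpa using hvS
    obtain ⟨δ, hδpos, hδ⟩ := Metric.isOpen_iff.1 hpre 0 h0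
    exact ⟨δ, hδpos, fun s hs => hδ (by simpa [Real.dist_eq] using hs)⟩
  -- Euler identity E1
  have hE1 : fderiv ℝ L v v = 2 * L v := by
    have h1 : HasDerivAt (fun t : ℝ => L (t • v)) (fderiv ℝ L v v) 1 := by
      have := hline 0 v 1 (by simpa using hvstar)
      simpa using this
    have h2 : HasDerivAt (fun t : ℝ => t^2 * L v) (2 * L v) 1 := by
      simpa using (hasDerivAt_pow 2 (1:ℝ)).mul_const (L v)
    have heq : (fun t : ℝ => L (t • v)) =ᶠ[𝓝 (1:ℝ)] fun t => t^2 * L v := by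
      filter_upwards [Ioi_mem_nhds (zero_lt_one)] with t ht
      exact hL_homog v hvstar t ht
    exact (h1.congr_of_eventuallyEq heq.symm).unique h2
  -- scaling of the first derivative
  have hH1 : ∀ t : ℝ, 0 < t → ∀ u : V, fderiv ℝ L (t • v) u = t * fderiv ℝ L v u := by
    intro t ht u
    obtain ⟨δ, hδpos, hδ⟩ := hball u Astar hAstar_open hvstar
    have h1 : HasDerivAt (fun s : ℝ => L (t • v + s • (t • u)))
        (fderiv ℝ L (t • v) (t • u)) 0 := by
      have := hline (t • v) (t • u) 0 (by simpa using hAstar_cone v hvstar t ht)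
      simpa using this
    have h2 : HasDerivAt (fun s : ℝ => t^2 * L (v + s • u)) (t^2 * fderiv ℝ L v u) 0 := by
      have := (hline v u 0 (by simpa using hvstar)).const_mul (t^2)
      simpa using this
    have heq : (fun s : ℝ => L (t • v + s • (t • u)))
        =ᶠ[𝓝 (0:ℝ)] fun s => t^2 * L (v + s • u) := by
      have hnb : Metric.ball (0:ℝ) δ ∈ 𝓝 (0:ℝ) := Metric.ball_mem_nhds 0 hδpos
      filter_upwards [hnb] with s hs
      have hmem : v + s • u ∈ Astar := hδ s (by simpa [Real.dist_eq] using hs)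
      have e : t • v + s • (t • u) = t • (v + s • u) := by
        rw [smul_add, smul_smul, smul_smul, mul_comm]
      rw [e, hL_homog _ hmem t ht]
    have := (h1.congr_of_eventuallyEq heq.symm).unique h2
    have e2 : fderiv ℝ L (t • v) (t • u) = t * fderiv ℝ L (t • v) u := by
      simp [map_smul]
    rw [e2] at this
    have ht0 : t ≠ 0 := ht.ne'
    exact mul_left_cancel₀ ht0 (by linear_combination this)
  -- Euler identity E2
  have hE2 : ∀ u : V, fderiv ℝ (fderiv ℝ L) v v u = fderiv ℝ L v u := by
    intro u
    have h1 : HasDerivAt (fun t : ℝ => fderiv ℝ L (t • v) u)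
        (fderiv ℝ (fderiv ℝ L) v v u) 1 := by
      have := hline2 0 v u 1 (by simpa using hvstar)
      simpa using this
    have h2 : HasDerivAt (fun t : ℝ => t * fderiv ℝ L v u) (fderiv ℝ L v u) 1 := by
      simpa using (hasDerivAt_id (1:ℝ)).mul_const (fderiv ℝ L v u)
    have heq : (fun t : ℝ => fderiv ℝ L (t • v) u)
        =ᶠ[𝓝 (1:ℝ)] fun t => t * fderiv ℝ L v u := by
      filter_upwards [Ioi_mem_nhds (zero_lt_one)] with t ht
      exact hH1 t ht u
    exact (h1.congr_of_eventuallyEq heq.symm).unique h2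
  -- symmetry of the second derivative at v
  have hsymm : ∀ a b : V, fderiv ℝ (fderiv ℝ L) v a b = fderiv ℝ (fderiv ℝ L) v b a :=
    (hL_smooth v hvstar).isSymmSndFDerivAt (by simp; exact WithTop.coe_le_coe.2 le_top)
  -- superadditivity
  have hsuper := aux_superadd A hA_cone Astar hA_sub L hL_homog hL_pos hL_conv
  -- membership of v + t•w
  have hmem : ∀ t : ℝ, 0 ≤ t → v + t • w ∈ A :=
    fun t ht => aux_mem A hA_open hA_conv hA_cone v hv w hw.1 t ht
  set S := Real.sqrt (L v) with hS_def
  set c := Real.sqrt (L w) with hc_def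
  have hS : 0 < S := Real.sqrt_pos.2 hLv
  have hS2 : S^2 = L v := Real.sq_sqrt hLv.le
  have hc0 : 0 ≤ c := Real.sqrt_nonneg _
  -- KEY1
  have hKEY1 : ∀ t : ℝ, 0 ≤ t → (S + t*c)^2 ≤ L (v + t • w) := by
    intro t ht
    rcases eq_or_lt_of_le ht with rfl | htpos
    · simpa using hS2.le
    · have hnb : (𝓝[A] w).NeBot := mem_closure_iff_nhdsWithin_neBot.1 hw.1
      have hvtw : v + t • w ∈ A := hmem t ht
      have h1 : Tendsto (fun x : V => L (v + t • x)) (𝓝[A] w) (𝓝 (L (v + t • w))) := by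
        have hf : ContinuousAt (fun x : V => v + t • x) w :=
          (continuous_const.add (continuous_const_smul t)).continuousAt
        have hcont : ContinuousAt (fun x : V => L (v + t • x)) w :=
          (hL_smooth _ (hA_sub hvtw)).continuousAt.tendsto.comp hf
        exact hcont.continuousWithinAt
      have h2 : Tendsto (fun x : V => (S + t * Real.sqrt (L x))^2) (𝓝[A] w)
          (𝓝 ((S + t*c)^2)) := by
        have hcont : ContinuousAt (fun x : V => (S + t * Real.sqrt (L x))^2) w := by
          have hLc : ContinuousAt L w := (hL_smooth w hwstar).continuousAt
          exact ((continuousAt_const.add (continuousAt_const.mul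
            (Real.continuous_sqrt.continuousAt.comp hLc))).pow 2)
        exact hcont.continuousWithinAt
      refine le_of_tendsto_of_tendsto h2 h1 ?_
      filter_upwards [self_mem_nhdsWithin] with x hxA
      have htx : t • x ∈ A := hA_cone x hxA t htpos
      have hsup := hsuper v hv (t • x) htx
      have hsqrt : Real.sqrt (L (t • x)) = t * Real.sqrt (L x) := by
        rw [hL_homog x (hA_sub hxA) t htpos, Real.sqrt_mul (sq_nonneg t), Real.sqrt_sq ht]
      rw [hsqrt] at hsup
      have hnn : 0 ≤ S + t * Real.sqrt (L x) := by positivity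
      calc (S + t * Real.sqrt (L x))^2 ≤ (Real.sqrt (L (v + t • x)))^2 := by
            apply pow_le_pow_left₀ hnn hsup.2
        _ = L (v + t • x) := Real.sq_sqrt (hL_pos _ hsup.1).le
  -- first derivative bound: 2*S*c ≤ fderiv L v w
  have hfirst : 2*S*c ≤ fderiv ℝ L v w := by
    have hf0 : HasDerivAt (fun t : ℝ => L (v + t • w)) (fderiv ℝ L v w) 0 := by
      have := hline v w 0 (by simpa using hvstar)
      simpa using this
    have hg0 : HasDerivAt (fun t : ℝ => (S + t*c)^2) (2*S*c) 0 := by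
      have hb : HasDerivAt (fun t : ℝ => S + t*c) c 0 := by
        simpa using ((hasDerivAt_id (0:ℝ)).mul_const c).const_add S
      simpa using hb.fun_pow 2
    have hh0 := hf0.fun_sub hg0
    have := aux_deriv_nonneg_right (δ := 1) one_pos hh0 ?_
    · linarith
    · intro t ht _
      have h1 := hKEY1 t ht
      have h2 : L (v + (0:ℝ) • w) = L v := by simp
      simp only [h2]
      have h3 : (S + 0*c)^2 = L v := by simpa using hS2
      nlinarith [hKEY1 t ht]
  -- negative semidefiniteness bound: 2 L(v) g_v(u,u) ≤ (dL_v u)²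
  have hQ : ∀ u : V, 2 * L v * (fderiv ℝ (fderiv ℝ L) v u u) ≤ (fderiv ℝ L v u)^2 := by
    intro u
    obtain ⟨δ, hδpos, hδ⟩ := hball u A hA_open hv
    set fu : ℝ → ℝ := fun s => L (v + s • u) with hfu_def
    set fu' : ℝ → ℝ := fun s => fderiv ℝ L (v + s • u) u with hfu'_def
    have hmemA : ∀ s : ℝ, s ∈ Ioo (-δ) δ → v + s • u ∈ A := fun s hs =>
      hδ s (abs_lt.2 ⟨hs.1, hs.2⟩)
    have hmemS : ∀ s : ℝ, s ∈ Ioo (-δ) δ → v + s • u ∈ Astar := fun s hs => hA_sub (hmemA s hs)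
    have h0mem : (0:ℝ) ∈ Ioo (-δ) δ := ⟨by linarith, hδpos⟩
    have hdf : ∀ s ∈ Ioo (-δ) δ, HasDerivAt fu (fu' s) s := fun s hs => hline v u s (hmemS s hs)
    have hnegmem : ∀ s ∈ Ioo (-δ) δ, (-s) ∈ Ioo (-δ) δ := fun s hs =>
      ⟨by linarith [hs.2], by linarith [hs.1]⟩
    have hdfneg : ∀ s ∈ Ioo (-δ) δ, HasDerivAt (fun r => fu (-r)) (-(fu' (-s))) s := by
      intro s hs
      have := (hdf (-s) (hnegmem s hs)).comp s (hasDerivAt_neg s)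
      simpa [mul_comm, Function.comp_def] using this
    have hfu0 : fu 0 = L v := by simp [hfu_def]
    have hfu'0 : fu' 0 = fderiv ℝ L v u := by simp [hfu'_def]
    set p := fderiv ℝ L v u with hp_def
    set q := fderiv ℝ (fderiv ℝ L) v u u with hq_def
    have hq0 : HasDerivAt fu' q 0 := by
      have := hline2 v u u 0 (hmemS 0 h0mem)
      simpa [hq_def] using this
    have hq0' : HasDerivAt fu' q (-(0:ℝ)) := by rw [neg_zero]; exact hq0
    have hqneg : HasDerivAt (fun r : ℝ => fu' (-r)) (-q) 0 := by
      have := hq0'.comp (0:ℝ) (hasDerivAt_neg (0:ℝ))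
      simpa [mul_comm, Function.comp_def] using this
    set hh : ℝ → ℝ := fun s => (4*L v + fu (-s) - fu s)^2 - 16 * L v * fu (-s) with hh_def
    set hh' : ℝ → ℝ := fun s =>
      (2*(4*L v + fu (-s) - fu s))*(-(fu' (-s)) - fu' s) + 16 * L v * (fu' (-s)) with hh'_def
    have hdh : ∀ s ∈ Ioo (-δ) δ, HasDerivAt hh (hh' s) s := by
      intro s hs
      have hσ : HasDerivAt (fun r => 4*L v + fu (-r) - fu r) (0 + -(fu' (-s)) - fu' s) s :=
        ((hasDerivAt_const s (4*L v)).add (hdfneg s hs)).sub (hdf s hs)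
      have h1 := hσ.fun_pow 2
      have h2 : HasDerivAt (fun r => 16 * L v * fu (-r)) (16 * L v * (-(fu' (-s)))) s :=
        (hdfneg s hs).const_mul (16 * L v)
      have h3 := h1.fun_sub h2
      convert h3 using 1
      · rfl
      · rfl
      simp only [hh'_def]
      ring
    -- second derivative of hh at 0
    have hA0 : HasDerivAt (fun r => 4*L v + fu (-r) - fu r) (0 + -(fu' (-0)) - fu' 0) 0 :=
      ((hasDerivAt_const (0:ℝ) (4*L v)).add (hdfneg 0 h0mem)).sub (hdf 0 h0mem)
    have hB0 : HasDerivAt (fun r => -(fu' (-r)) - fu' r) (-(-q) - q) 0 := hqneg.neg.sub hq0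
    have hprod := ((hA0.const_mul 2).fun_mul hB0).fun_add (hqneg.const_mul (16 * L v))
    have hsnd : HasDerivAt hh' (8*p^2 - 16*L v*q) 0 := by
      convert hprod using 1
      · rfl
      · rfl
      simp only [neg_zero, hfu0, hfu'0]
      ring
    have hh'0 : hh' 0 = 0 := by
      simp only [hh'_def, neg_zero, hfu0, hfu'0]
      ring
    have hmin : ∀ t : ℝ, 0 ≤ t → t < δ → hh 0 ≤ hh t := by
      intro t ht htδ
      have htmem : t ∈ Ioo (-δ) δ := ⟨by linarith, htδ⟩
      have hx := hmemA t htmem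
      have hy := hmemA (-t) (hnegmem t htmem)
      have hsup := hsuper _ hx _ hy
      have hsum : (v + t • u) + (v + (-t) • u) = (2:ℝ) • v := by
        rw [neg_smul, two_smul]; abel
      rw [hsum] at hsup
      have h2S : Real.sqrt (L ((2:ℝ) • v)) = 2*S := by
        rw [hL_homog v hvstar 2 two_pos, Real.sqrt_mul (sq_nonneg 2), Real.sqrt_sq
          (by norm_num : (0:ℝ) ≤ 2), hS_def]
      rw [h2S] at hsup
      set P := Real.sqrt (L (v + t • u)) with hP_def
      set Qq := Real.sqrt (L (v + (-t) • u)) with hQq_def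
      have hP0 : 0 ≤ P := Real.sqrt_nonneg _
      have hQq0 : 0 ≤ Qq := Real.sqrt_nonneg _
      have hP2 : P^2 = L (v + t • u) := Real.sq_sqrt (hL_pos _ hx).le
      have hQq2 : Qq^2 = L (v + (-t) • u) := Real.sq_sqrt (hL_pos _ hy).le
      have hPQ : P + Qq ≤ 2*S := hsup.2
      have hfut : fu t = P^2 := by rw [hfu_def]; exact hP2.symm
      have hfunt : fu (-t) = Qq^2 := by rw [hfu_def]; exact hQq2.symm
      have hhh0 : hh 0 = 0 := by
        simp [hh_def, hfu0]
        ring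
      have hhht : hh t = (4*L v + Qq^2 - P^2)^2 - 16*L v*Qq^2 := by
        rw [hh_def]; simp only [hfut, hfunt]
      rw [hhh0, hhht]
      have hk1 : Qq ≤ 2*S := by linarith
      have hk2 : P^2 ≤ (2*S - Qq)^2 := by nlinarith
      have hk3 : 4*S*Qq ≤ 4*L v + Qq^2 - P^2 := by nlinarith [hS2]
      nlinarith [hS2, mul_nonneg (mul_nonneg (by norm_num : (0:ℝ) ≤ 4) hS.le) hQq0]
    have hfin := aux_snd_deriv_nonneg_right hδpos hdh hsnd hh'0 hmin
    linarith
  -- strict positivity of dL_v(w)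
  have hpos : 0 < fderiv ℝ L v w := by
    rcases Classical.em (w ∈ A) with hwA | hwA
    · have hcpos : 0 < c := Real.sqrt_pos.2 (hL_pos w hwA)
      nlinarith [hfirst]
    · have hcz : c = 0 := by rw [hc_def, hL_null w ⟨hw.1, hwA⟩ hw0, Real.sqrt_zero]
      have hge : 0 ≤ fderiv ℝ L v w := by nlinarith [hfirst]
      rcases hge.lt_or_eq with hlt | heq0
      · exact hlt
      exfalso
      have h0 : fderiv ℝ L v w = 0 := heq0.symm
      obtain ⟨δw, hδwpos, hδw⟩ := hball w Astar hAstar_open hvstar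
      have hmemSw : ∀ s : ℝ, s ∈ Ioo (-δw) δw → v + s • w ∈ Astar := fun s hs =>
        hδw s (abs_lt.2 ⟨hs.1, hs.2⟩)
      have h1 : 0 ≤ fderiv ℝ (fderiv ℝ L) v w w := by
        refine aux_snd_deriv_nonneg_right hδwpos
          (f := fun s => L (v + s • w)) (f' := fun s => fderiv ℝ L (v + s • w) w)
          (fun s hs => hline v w s (hmemSw s hs)) ?_ ?_ ?_
        · have := hline2 v w w 0 (hmemSw 0 ⟨by linarith, hδwpos⟩)
          simpa using this
        · simpa using h0
        · intro t ht _
          have hK := hKEY1 t ht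
          rw [hcz] at hK
          simp only [mul_zero, add_zero] at hK
          have hv0 : L (v + (0:ℝ) • w) = L v := by simp
          simp only [hv0]
          nlinarith [hS2]
      have h2 : fderiv ℝ (fderiv ℝ L) v w w ≤ 0 := by
        have := hQ w
        rw [h0] at this
        nlinarith
      have hww : fderiv ℝ (fderiv ℝ L) v w w = 0 := le_antisymm h2 h1
      have hker : ∀ u : V, fderiv ℝ (fderiv ℝ L) v w u = 0 := by
        intro u
        set p1 := fderiv ℝ L v u with hp1_def
        set q1 := fderiv ℝ (fderiv ℝ L) v u u with hq1_def
        set B := fderiv ℝ (fderiv ℝ L) v w u with hB_def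
        set C := p1^2 - 2*L v*q1 with hC_def
        have hC : 0 ≤ C := by
          have := hQ u
          rw [hC_def]
          linarith
        have key : ∀ s : ℝ, 4*L v*B*s ≤ s^2*C := by
          intro s
          have hq := hQ (w + s • u)
          have e1 : fderiv ℝ L v (w + s • u) = s * p1 := by
            simp [map_add, map_smul, h0, hp1_def]
          have e2 : fderiv ℝ (fderiv ℝ L) v (w + s • u) (w + s • u)
              = 2*s*B + s^2*q1 := by
            have ha : fderiv ℝ (fderiv ℝ L) v (w + s • u)
                = fderiv ℝ (fderiv ℝ L) v w + s • fderiv ℝ (fderiv ℝ L) v u := by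
              rw [map_add, map_smul]
            rw [ha]
            rw [ContinuousLinearMap.add_apply, ContinuousLinearMap.smul_apply, map_add,
              map_add, hww, hsymm u w, smul_eq_mul, map_smul, map_smul, smul_eq_mul,
              smul_eq_mul, hB_def, hq1_def]
            ring
          rw [e1, e2] at hq
          nlinarith [hq]
        have hlim : Tendsto (fun s : ℝ => s*C) (𝓝[>] 0) (𝓝 0) := by
          have h : Tendsto (fun s : ℝ => s*C) (𝓝 (0:ℝ)) (𝓝 (0*C)) :=
            (continuousAt_id (x := (0:ℝ))).mul_const C
          rw [zero_mul] at h
          exact h.mono_left nhdsWithin_le_nhds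
        have hB1 : 4*L v*B ≤ 0 := by
          refine ge_of_tendsto hlim ?_
          filter_upwards [self_mem_nhdsWithin] with s hs
          have hs0 : (0:ℝ) < s := hs
          refine le_of_mul_le_mul_right ?_ hs0
          calc 4*L v*B*s ≤ s^2*C := key s
            _ = s*C*s := by ring
        have hB2 : -(4*L v*B) ≤ 0 := by
          refine ge_of_tendsto hlim ?_
          filter_upwards [self_mem_nhdsWithin] with s hs
          have hs0 : (0:ℝ) < s := hs
          refine le_of_mul_le_mul_right ?_ hs0
          calc -(4*L v*B)*s = 4*L v*B*(-s) := by ring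
            _ ≤ (-s)^2*C := key (-s)
            _ = s*C*s := by ring
        have h4 : (4*L v) ≠ 0 := by positivity
        have hBz : (4*L v)*B = 0 := by linarith
        exact (mul_eq_zero.mp hBz).resolve_left h4
      have hwz : w = 0 := hv_nondeg w (fun u => by rw [hft, hker u]; ring)
      exact hw0 hwz
  -- conclusion
  have hftvvw : fundamentalTensor L v v w = (1/2) * fderiv ℝ L v w := by
    rw [hft, hE2]
  have hα : 0 < fundamentalTensor L v v w := by rw [hftvvw]; linarith
  refine ⟨hα, fundamentalTensor L v v w / L v, div_pos hα hLv,
    w - (fundamentalTensor L v v w / L v) • v, by abel, ?_⟩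
  rw [hft]
  have e : fderiv ℝ (fderiv ℝ L) v v (w - (fundamentalTensor L v v w / L v) • v)
      = fderiv ℝ (fderiv ℝ L) v v w
        - (fundamentalTensor L v v w / L v) * (fderiv ℝ (fderiv ℝ L) v v v) := by
    simp [map_sub, map_smul]
  rw [e, hE2, hE2, hE1, hftvvw]
  field_simp
  ring
end

section
/- For every lightlike vector v ∈ Â \ A and every w ∈ V, the following are equivalent: (a) g_v(v,w) > 0; (b) v + t·w ∈ A for some t > 0; (c) v + t·w ∈ A for all sufficiently small t > 0. In other words, g_v(v,w) > 0 exactly when w points into the open convex cone A at the boundary point v (this equivalence is established in the proof of Remark 2.4). -/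
open Set

section Aux

variable {V : Type} [NormedAddCommGroup V] [NormedSpace ℝ V]

/-- Homogeneity of the derivative of a positively 2-homogeneous function. -/
lemma aux_fderiv_homog (Astar : Set V) (hO : IsOpen Astar) (L : V → ℝ)
    (hsm : ∀ v ∈ Astar, ContDiffAt ℝ (⊤ : ℕ∞) L v)
    (hhom : ∀ v ∈ Astar, ∀ t : ℝ, 0 < t → L (t • v) = t ^ 2 * L v)
    {v : V} (hv : v ∈ Astar) {t : ℝ} (ht : 0 < t) (htv : t • v ∈ Astar) :
    fderiv ℝ L (t • v) = t • fderiv ℝ L v := by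
  have hdtv : DifferentiableAt ℝ L (t • v) := ((hsm _ htv).differentiableAt (by simp))
  have hdv : DifferentiableAt ℝ L v := ((hsm _ hv).differentiableAt (by simp))
  have hinner : HasFDerivAt (fun u : V => t • u) (t • ContinuousLinearMap.id ℝ V) v := by
    simpa [Pi.smul_def] using (t • ContinuousLinearMap.id ℝ V).hasFDerivAt (x := v)
  have h1 : HasFDerivAt (fun u : V => L (t • u))
      ((fderiv ℝ L (t • v)).comp (t • ContinuousLinearMap.id ℝ V)) v :=
    hdtv.hasFDerivAt.comp v hinner
  have h2 : HasFDerivAt (fun u : V => t ^ 2 * L u) ((t ^ 2 : ℝ) • fderiv ℝ L v) v :=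
    hdv.hasFDerivAt.const_mul _
  have heq : (fun u : V => t ^ 2 * L u) =ᶠ[nhds v] (fun u : V => L (t • u)) := by
    filter_upwards [hO.mem_nhds hv] with u hu using (hhom u hu t ht).symm
  have h3 := (h1.congr_of_eventuallyEq heq).unique h2
  ext z
  have := DFunLike.congr_fun h3 z
  simp only [ContinuousLinearMap.coe_comp', Function.comp_apply,
    ContinuousLinearMap.smul_apply, ContinuousLinearMap.coe_smul',
    ContinuousLinearMap.coe_id', Pi.smul_apply, id_eq, smul_eq_mul] at this ⊢
  rw [map_smul, smul_eq_mul] at this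
  have h4 : t * ((fderiv ℝ L (t • v)) z) = t * (t * (fderiv ℝ L v) z) := by
    ring_nf; ring_nf at this; linarith [this]
  exact mul_left_cancel₀ (ne_of_gt ht) h4

/-- Euler identity: `DL(v)(v) = 2 L(v)`. -/
lemma aux_euler1 (Astar : Set V) (hO : IsOpen Astar) (L : V → ℝ)
    (hsm : ∀ v ∈ Astar, ContDiffAt ℝ (⊤ : ℕ∞) L v)
    (hhom : ∀ v ∈ Astar, ∀ t : ℝ, 0 < t → L (t • v) = t ^ 2 * L v)
    {v : V} (hv : v ∈ Astar) :
    fderiv ℝ L v v = 2 * L v := by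
  have hdv : DifferentiableAt ℝ L v := ((hsm _ hv).differentiableAt (by simp))
  have hinner : HasDerivAt (fun t : ℝ => t • v) v 1 := by
    simpa using (hasDerivAt_id (1 : ℝ)).smul_const v
  have h1 : HasDerivAt (fun t : ℝ => L (t • v)) (fderiv ℝ L v v) 1 := by
    have hF : HasFDerivAt L (fderiv ℝ L v) ((1:ℝ) • v) := by
      rw [one_smul]; exact hdv.hasFDerivAt
    simpa [Function.comp_def] using hF.comp_hasDerivAt 1 hinner
  have h2 : HasDerivAt (fun t : ℝ => t ^ 2 * L v) (2 * L v) 1 := by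
    simpa using (hasDerivAt_pow 2 (1 : ℝ)).mul_const (L v)
  have heq : (fun t : ℝ => L (t • v)) =ᶠ[nhds 1] (fun t : ℝ => t ^ 2 * L v) := by
    filter_upwards [isOpen_Ioi.mem_nhds (show (0:ℝ) < 1 by norm_num)] with t htp
    exact hhom v hv t htp
  exact h1.unique (h2.congr_of_eventuallyEq heq)

/-- Euler identity for the second derivative: `D²L(v)(v,·) = DL(v)(·)`. -/
lemma aux_euler2 (Astar : Set V) (hO : IsOpen Astar) (L : V → ℝ)
    (hsm : ∀ v ∈ Astar, ContDiffAt ℝ (⊤ : ℕ∞) L v)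
    (hhom : ∀ v ∈ Astar, ∀ t : ℝ, 0 < t → L (t • v) = t ^ 2 * L v)
    (hcone : ∀ v ∈ Astar, ∀ t : ℝ, 0 < t → t • v ∈ Astar)
    {v : V} (hv : v ∈ Astar) :
    fderiv ℝ (fderiv ℝ L) v v = fderiv ℝ L v := by
  have hdD : DifferentiableAt ℝ (fderiv ℝ L) v :=
    ((hsm v hv).fderiv_right (m := 1) (WithTop.coe_le_coe.2 le_top)).differentiableAt (by simp)
  have hinner : HasDerivAt (fun t : ℝ => t • v) v 1 := by
    simpa using (hasDerivAt_id (1 : ℝ)).smul_const v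
  have h1 : HasDerivAt (fun t : ℝ => fderiv ℝ L (t • v)) (fderiv ℝ (fderiv ℝ L) v v) 1 := by
    have hF : HasFDerivAt (fderiv ℝ L) (fderiv ℝ (fderiv ℝ L) v) ((1:ℝ) • v) := by
      rw [one_smul]; exact hdD.hasFDerivAt
    simpa [Function.comp_def] using hF.comp_hasDerivAt 1 hinner
  have h2 : HasDerivAt (fun t : ℝ => t • fderiv ℝ L v) (fderiv ℝ L v) 1 := by
    simpa using (hasDerivAt_id (1 : ℝ)).smul_const (fderiv ℝ L v)
  have heq : (fun t : ℝ => fderiv ℝ L (t • v)) =ᶠ[nhds 1] (fun t : ℝ => t • fderiv ℝ L v) := by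
    filter_upwards [isOpen_Ioi.mem_nhds (show (0:ℝ) < 1 by norm_num)] with t htp
    exact aux_fderiv_homog Astar hO L hsm hhom hv htp (hcone v hv t htp)
  exact h1.unique (h2.congr_of_eventuallyEq heq)

end Aux

set_option maxHeartbeats 2000000 in
/-- From the proof of Remark 2.4: for a lightlike vector `v` and any `w`, the condition
`g_v(v,w) > 0` holds iff `w` points into the open cone `A` at `v`, i.e. iff
`v + t·w ∈ A` for some `t > 0`, iff `v + t·w ∈ A` for all sufficiently small `t > 0`. -/
theorem finsler_lightlike_inward_pointing_iff
    {V : Type} [NormedAddCommGroup V] [NormedSpace ℝ V] [FiniteDimensional ℝ V]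
    {n : ℕ} (hn : 2 ≤ n) (hdim : Module.finrank ℝ V = n)
    (A : Set V) (hA_open : IsOpen A) (hA_ne : A.Nonempty)
    (hA0 : (0 : V) ∉ A) (hA_conv : Convex ℝ A)
    (hA_cone : ∀ v ∈ A, ∀ t : ℝ, 0 < t → t • v ∈ A)
    (hA_salient : ∀ v : V, v ∈ closure A → -v ∈ closure A → v = 0)
    (Astar : Set V) (hAstar_open : IsOpen Astar) (hAstar0 : (0 : V) ∉ Astar)
    (hAstar_cone : ∀ v ∈ Astar, ∀ t : ℝ, 0 < t → t • v ∈ Astar)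
    (hAhat_sub : closure A \ {0} ⊆ Astar)
    (L : V → ℝ)
    (hL_smooth : ∀ v ∈ Astar, ContDiffAt ℝ (⊤ : ℕ∞) L v)
    (hL_homog : ∀ v ∈ Astar, ∀ t : ℝ, 0 < t → L (t • v) = t ^ 2 * L v)
    (hL_pos : ∀ v ∈ A, 0 < L v)
    (hL_null : ∀ v ∈ closure A \ A, v ≠ 0 → L v = 0)
    (hL_conv : Convex ℝ {v ∈ A | 1 ≤ L v})
    (hg_nondeg : ∀ v ∈ closure A \ A, v ≠ 0 →
      ∀ u : V, (∀ w : V, fundamentalTensor L v u w = 0) → u = 0)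
    (v : V) (hv : v ∈ closure A \ A) (hv0 : v ≠ 0) (w : V) :
    (0 < fundamentalTensor L v v w ↔ ∃ t : ℝ, 0 < t ∧ v + t • w ∈ A) ∧
    (0 < fundamentalTensor L v v w ↔
      ∃ ε : ℝ, 0 < ε ∧ ∀ t : ℝ, 0 < t → t < ε → v + t • w ∈ A) := by
  classical
  obtain ⟨hvcl, hvnA⟩ := hv
  have hv' : v ∈ closure A \ A := ⟨hvcl, hvnA⟩
  have hvstar : v ∈ Astar := hAhat_sub ⟨hvcl, by simpa using hv0⟩
  have hLv : L v = 0 := hL_null v hv' hv0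
  set D : V →L[ℝ] ℝ := fderiv ℝ L v with hDdef
  -- the fundamental tensor with `v` in the first slot is `(1/2) D`
  have hFTv : ∀ z : V, fundamentalTensor L v v z = (1 / 2) * D z := by
    intro z
    rw [fundamentalTensor, iteratedFDeriv_two_apply]
    simp only [Matrix.cons_val_zero, Matrix.cons_val_one, Matrix.head_cons]
    rw [aux_euler2 Astar hAstar_open L hL_smooth hL_homog hAstar_cone hvstar]
  have hDv : D v = 0 := by
    rw [hDdef, aux_euler1 Astar hAstar_open L hL_smooth hL_homog hvstar, hLv, mul_zero]
  have hdv : DifferentiableAt ℝ L v := (hL_smooth v hvstar).differentiableAt (by simp)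
  -- the derivative is nonnegative on A
  have hBnd : ∀ u ∈ A, 0 ≤ D u := by
    intro u hu
    have hin : HasDerivAt (fun s : ℝ => v + s • (u - v)) (u - v) 0 := by
      simpa using ((hasDerivAt_id (0 : ℝ)).smul_const (u - v)).const_add v
    have hcomp : HasDerivAt (fun s : ℝ => L (v + s • (u - v))) (D (u - v)) 0 := by
      have hF : HasFDerivAt L D (v + (0 : ℝ) • (u - v)) := by
        simpa using hdv.hasFDerivAt
      simpa [Function.comp_def] using hF.comp_hasDerivAt 0 hin
    have hmem : ∀ s : ℝ, 0 < s → s < 1 → v + s • (u - v) ∈ A := by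
      intro s hs hs1
      have h := hA_conv.combo_interior_closure_mem_interior (x := u) (y := v)
        (a := s) (b := 1 - s) (by rwa [hA_open.interior_eq]) hvcl hs (by linarith) (by ring)
      rw [hA_open.interior_eq] at h
      convert h using 1
      module
    have hmono : nhdsWithin (0:ℝ) (Ioi 0) ≤ nhdsWithin (0:ℝ) {(0:ℝ)}ᶜ :=
      nhdsWithin_mono 0 (fun x (hx : x ∈ Ioi (0:ℝ)) => (ne_of_gt hx : x ≠ 0))
    have hslope := (hasDerivAt_iff_tendsto_slope.1 hcomp).mono_left hmono
    refine le_trans ?_ (le_of_eq (by rw [map_sub, hDv, sub_zero]) :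
      D (u - v) ≤ D u)
    refine ge_of_tendsto hslope ?_
    filter_upwards [Ioo_mem_nhdsGT_of_mem (show (0:ℝ) ∈ Ico (0:ℝ) 1 by constructor <;> norm_num)]
      with s hs
    have hpos : 0 < L (v + s • (u - v)) := hL_pos _ (hmem s hs.1 hs.2)
    have h0 : L (v + (0:ℝ) • (u - v)) = 0 := by simpa using hLv
    rw [slope_def_field]
    simp only [zero_smul, add_zero] at h0 ⊢
    rw [h0 , sub_zero, sub_zero]
    exact le_of_lt (div_pos hpos hs.1)
  -- the derivative is strictly positive on A
  have hDnz : ∃ u0 ∈ A, 0 < D u0 := by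
    by_contra hcon
    push_neg at hcon
    have hz : ∀ u ∈ A, D u = 0 := fun u hu => le_antisymm (hcon u hu) (hBnd u hu)
    have hD0 : ∀ z : V, D z = 0 := by
      intro z
      obtain ⟨u, hu⟩ := hA_ne
      obtain ⟨ε, hε, hball⟩ := Metric.isOpen_iff.1 hA_open u hu
      have hδ : 0 < ε / (2 * (‖z‖ + 1)) := by positivity
      have hmem : u + (ε / (2 * (‖z‖ + 1))) • z ∈ A := by
        apply hball
        rw [Metric.mem_ball, dist_eq_norm]
        have hb : ‖u + (ε / (2 * (‖z‖ + 1))) • z - u‖ = (ε / (2 * (‖z‖ + 1))) * ‖z‖ := by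
          rw [add_sub_cancel_left, norm_smul, Real.norm_eq_abs, abs_of_pos hδ]
        rw [hb]
        have h1 : (ε / (2 * (‖z‖ + 1))) * ‖z‖ < (ε / (2 * (‖z‖ + 1))) * (‖z‖ + 1) := by
          apply mul_lt_mul_of_pos_left (by linarith) hδ
        have h2 : (ε / (2 * (‖z‖ + 1))) * (‖z‖ + 1) = ε / 2 := by
          field_simp
        linarith
      have := hz _ hmem
      rw [map_add, map_smul, hz u hu, smul_eq_mul, zero_add] at this
      exact (mul_eq_zero.1 this).resolve_left (ne_of_gt hδ)
    exact hv0 (hg_nondeg v hv' hv0 v (fun z => by rw [hFTv z, hD0 z, mul_zero]))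
  have hBndpos : ∀ u ∈ A, 0 < D u := by
    intro u hu
    rcases (hBnd u hu).lt_or_eq with h | h
    · exact h
    exfalso
    obtain ⟨u0, hu0A, hu0⟩ := hDnz
    obtain ⟨ε, hε, hball⟩ := Metric.isOpen_iff.1 hA_open u hu
    have hδ : 0 < ε / (2 * (‖u0‖ + 1)) := by positivity
    have hmem : u - (ε / (2 * (‖u0‖ + 1))) • u0 ∈ A := by
      apply hball
      rw [Metric.mem_ball, dist_eq_norm]
      have hb : ‖u - (ε / (2 * (‖u0‖ + 1))) • u0 - u‖ = (ε / (2 * (‖u0‖ + 1))) * ‖u0‖ := by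
        rw [sub_right_comm, sub_self, zero_sub, norm_neg, norm_smul, Real.norm_eq_abs,
          abs_of_pos hδ]
      rw [hb]
      have h1 : (ε / (2 * (‖u0‖ + 1))) * ‖u0‖ < (ε / (2 * (‖u0‖ + 1))) * (‖u0‖ + 1) := by
        apply mul_lt_mul_of_pos_left (by linarith) hδ
      have h2 : (ε / (2 * (‖u0‖ + 1))) * (‖u0‖ + 1) = ε / 2 := by
        field_simp
      linarith
    have hb2 := hBnd _ hmem
    rw [map_sub, map_smul, ← h, smul_eq_mul, zero_sub, neg_nonneg] at hb2
    nlinarith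
  -- direction (b) ⇒ (a)
  have hKey1 : (∃ t : ℝ, 0 < t ∧ v + t • w ∈ A) → 0 < D w := by
    rintro ⟨t, ht, htA⟩
    have := hBndpos _ htA
    rw [map_add, hDv, map_smul, smul_eq_mul, zero_add] at this
    nlinarith
  -- direction (a) ⇒ (c): the tube argument
  have hKey2 : 0 < D w → ∃ ε : ℝ, 0 < ε ∧ ∀ t : ℝ, 0 < t → t < ε → v + t • w ∈ A := by
    intro hw
    obtain ⟨u0, hu0A, hu0pos⟩ := hDnz
    set z0 : V := u0 - v with hz0def
    have hz0 : 0 < D z0 := by rw [hz0def, map_sub, hDv, sub_zero]; exact hu0pos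
    set c0 : ℝ := min (D z0) (D w) with hc0def
    have hc0 : 0 < c0 := lt_min hz0 hw
    obtain ⟨U', hU'nh, hU'cd⟩ := (hL_smooth v hvstar).contDiffOn (m := 1) (by simp) (by simp)
    set U : Set V := interior U' with hUdef
    have hUopen : IsOpen U := isOpen_interior
    have hvU : v ∈ U := mem_interior_iff_mem_nhds.2 hU'nh
    have hcd : ContDiffOn ℝ 1 L U := hU'cd.mono interior_subset
    have hdiffU : ∀ x ∈ U, DifferentiableAt ℝ L x := fun x hx =>
      ((hcd.differentiableOn one_ne_zero).differentiableAt (hUopen.mem_nhds hx))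
    have hfc : ContinuousOn (fderiv ℝ L) U := hcd.continuousOn_fderiv_of_isOpen hUopen le_rfl
    have hφc : ContinuousOn (fun p : ℝ × V => fderiv ℝ L (v + p.1 • p.2) p.2)
        ((fun p : ℝ × V => v + p.1 • p.2) ⁻¹' U) := by
      have hmc : Continuous (fun p : ℝ × V => v + p.1 • p.2) := by fun_prop
      exact (hfc.comp hmc.continuousOn (fun p hp => hp)).clm_apply continuous_snd.continuousOn
    set K : Set V := segment ℝ z0 w with hKdef
    have hKcomp : IsCompact K := by
      rw [hKdef, segment_eq_image]; exact isCompact_Icc.image (by fun_prop)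
    have hOopen : IsOpen ((fun p : ℝ × V => v + p.1 • p.2) ⁻¹' U) :=
      hUopen.preimage (by fun_prop)
    have hWopen : IsOpen (((fun p : ℝ × V => v + p.1 • p.2) ⁻¹' U) ∩
        (fun p : ℝ × V => fderiv ℝ L (v + p.1 • p.2) p.2) ⁻¹' (Ioi (c0 / 2))) :=
      hφc.isOpen_inter_preimage hOopen isOpen_Ioi
    have hsub : ({(0:ℝ)} ×ˢ K) ⊆ (((fun p : ℝ × V => v + p.1 • p.2) ⁻¹' U) ∩
        (fun p : ℝ × V => fderiv ℝ L (v + p.1 • p.2) p.2) ⁻¹' (Ioi (c0 / 2))) := by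
      rintro ⟨s, z⟩ ⟨hs, hz⟩
      simp only [mem_singleton_iff] at hs
      subst hs
      constructor
      · show v + (0:ℝ) • z ∈ U
        simpa using hvU
      · show fderiv ℝ L (v + (0:ℝ) • z) z ∈ Ioi (c0 / 2)
        have hφ0 : fderiv ℝ L (v + (0:ℝ) • z) z = D z := by
          rw [zero_smul, add_zero, hDdef]
        rw [mem_Ioi, hφ0]
        obtain ⟨a, b, ha, hb, hab, rfl⟩ := hz
        rw [map_add, map_smul, map_smul, smul_eq_mul, smul_eq_mul]
        have h1 : c0 ≤ D z0 := min_le_left _ _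
        have h2 : c0 ≤ D w := min_le_right _ _
        nlinarith
    obtain ⟨uS, vS, huSopen, hvSopen, h0uS, hKvS, hprod⟩ :=
      generalized_tube_lemma isCompact_singleton hKcomp hWopen hsub
    obtain ⟨ε0, hε0, hball0⟩ := Metric.isOpen_iff.1 huSopen 0 (h0uS rfl)
    obtain ⟨zm, hzmK, hzm⟩ := hKcomp.exists_isMaxOn ⟨z0, left_mem_segment ℝ z0 w⟩
      (continuous_norm.continuousOn (s := K))
    have hR0 : (0:ℝ) ≤ ‖zm‖ := norm_nonneg _
    have hvpos : 0 < ‖v‖ := norm_pos_iff.2 hv0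
    refine ⟨min (min ε0 1) (‖v‖ / (2 * (‖zm‖ + 1))), lt_min (lt_min hε0 one_pos) (by positivity),
      ?_⟩
    intro t ht htε
    have htε0 : t < ε0 := lt_of_lt_of_le htε (le_trans (min_le_left _ _) (min_le_left _ _))
    have ht1 : t < 1 := lt_of_lt_of_le htε (le_trans (min_le_left _ _) (min_le_right _ _))
    have htv : t < ‖v‖ / (2 * (‖zm‖ + 1)) := lt_of_lt_of_le htε (min_le_right _ _)
    have hW' : ∀ τ ∈ Icc (0:ℝ) t, ∀ z ∈ K,
        v + τ • z ∈ U ∧ c0 / 2 < fderiv ℝ L (v + τ • z) z := by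
      intro τ hτ z hz
      have hmem : (τ, z) ∈ (((fun p : ℝ × V => v + p.1 • p.2) ⁻¹' U) ∩
          (fun p : ℝ × V => fderiv ℝ L (v + p.1 • p.2) p.2) ⁻¹' (Ioi (c0 / 2))) := by
        apply hprod
        refine ⟨hball0 ?_, hKvS hz⟩
        rw [Metric.mem_ball, dist_zero_right, Real.norm_eq_abs, abs_of_nonneg hτ.1]
        exact lt_of_le_of_lt hτ.2 htε0
      exact ⟨hmem.1, hmem.2⟩
    have hLpos : ∀ z ∈ K, 0 < L (v + t • z) := by
      intro z hz
      have hder : ∀ τ ∈ Icc (0:ℝ) t, HasDerivAt (fun τ' : ℝ => L (v + τ' • z))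
          (fderiv ℝ L (v + τ • z) z) τ := by
        intro τ hτ
        have hmem : v + τ • z ∈ U := (hW' τ hτ z hz).1
        have hin : HasDerivAt (fun τ' : ℝ => v + τ' • z) z τ := by
          simpa using ((hasDerivAt_id τ).smul_const z).const_add v
        have hF : HasFDerivAt L (fderiv ℝ L (v + τ • z)) (v + τ • z) :=
          (hdiffU _ hmem).hasFDerivAt
        simpa [Function.comp_def] using hF.comp_hasDerivAt τ hin
      have hcont : ContinuousOn (fun τ' : ℝ => L (v + τ' • z)) (Icc 0 t) := fun τ hτ =>
        ((hder τ hτ).continuousAt).continuousWithinAt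
      obtain ⟨τs, hτs, heq⟩ := exists_hasDerivAt_eq_slope (fun τ' : ℝ => L (v + τ' • z))
        (fun τ => fderiv ℝ L (v + τ • z) z) ht hcont
        (fun τ hτ => hder τ (Ioo_subset_Icc_self hτ))
      have heq' : fderiv ℝ L (v + τs • z) z = L (v + t • z) / t := by
        rw [heq]; simp [hLv]
      have hdpos : c0 / 2 < fderiv ℝ L (v + τs • z) z :=
        (hW' τs (Ioo_subset_Icc_self hτs) z hz).2
      rw [heq'] at hdpos
      calc (0:ℝ) < t * (c0 / 2) := by positivity
        _ < t * (L (v + t • z) / t) := by exact mul_lt_mul_of_pos_left hdpos ht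
        _ = L (v + t • z) := by field_simp
    have hne : ∀ z ∈ K, v + t • z ≠ 0 := by
      intro z hz h0
      have h1 : ‖v‖ = t * ‖z‖ := by
        have hv' : v = -(t • z) := eq_neg_of_add_eq_zero_left h0
        rw [hv', norm_neg, norm_smul, Real.norm_eq_abs, abs_of_pos ht]
      have h2 : ‖z‖ ≤ ‖zm‖ := hzm hz
      have h3 : t * (2 * (‖zm‖ + 1)) < ‖v‖ :=
        (lt_div_iff₀ (by positivity)).1 htv
      nlinarith [norm_nonneg z]
    have hnotfr : ∀ z ∈ K, v + t • z ∉ closure A \ A := fun z hz hmem =>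
      absurd (hL_null _ hmem (hne z hz)) (ne_of_gt (hLpos z hz))
    have haA : v + t • z0 ∈ A := by
      have h := hA_conv.combo_interior_closure_mem_interior (x := u0) (y := v)
        (a := t) (b := 1 - t) (by rwa [hA_open.interior_eq]) hvcl ht (by linarith) (by ring)
      rw [hA_open.interior_eq] at h
      convert h using 1
      rw [hz0def]; module
    by_contra hnin
    have hninc : v + t • w ∉ closure A := fun hc =>
      hnotfr w (right_mem_segment ℝ z0 w) ⟨hc, hnin⟩
    have hSpre : IsPreconnected ((fun z => v + t • z) '' K) := by
      rw [hKdef]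
      exact ((convex_segment z0 w).isPreconnected).image _
        ((by fun_prop : Continuous fun z : V => v + t • z).continuousOn)
    have hcover : ((fun z => v + t • z) '' K) ⊆ A ∪ (closure A)ᶜ := by
      rintro p ⟨z, hz, rfl⟩
      by_cases hpA : v + t • z ∈ A
      · exact Or.inl hpA
      · exact Or.inr (fun hc => hnotfr z hz ⟨hc, hpA⟩)
    have hres := hSpre A (closure A)ᶜ hA_open isClosed_closure.isOpen_compl hcover
      ⟨v + t • z0, mem_image_of_mem _ (left_mem_segment ℝ z0 w), haA⟩
      ⟨v + t • w, mem_image_of_mem _ (right_mem_segment ℝ z0 w), hninc⟩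
    obtain ⟨p, _, hpA, hpnc⟩ := hres
    exact hpnc (subset_closure hpA)
  -- assemble the two equivalences
  have hFTiff : 0 < fundamentalTensor L v v w ↔ 0 < D w := by
    rw [hFTv w]
    constructor <;> intro h <;> nlinarith
  constructor
  · rw [hFTiff]
    constructor
    · intro h
      obtain ⟨ε, hε, hall⟩ := hKey2 h
      exact ⟨ε / 2, by positivity, hall _ (by positivity) (by linarith)⟩
    · exact hKey1
  · rw [hFTiff]
    constructor
    · exact hKey2
    · rintro ⟨ε, hε, hall⟩
      exact hKey1 ⟨ε / 2, by positivity, hall _ (by positivity) (by linarith)⟩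
end
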